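/- arXiv:1001.4126 — 3 statements merged into one kernel-verified Lean document; each statement's English description precedes it below -/
import Mathlib

section
/- On the ring 𝒟⁻ of pseudo-differential operators over a commutative differential ring (𝒜, D), the adjoint map A ↦ A* is an involutive anti-automorphism: for all A, B ∈ 𝒟⁻ one has (A*)* = A and (A·B)* = B*·A*. -/
/-!
Pseudo-differential operators of the first type `𝒟⁻` over a commutative
differential ring `(𝒜, D)`.  An operator `A = Σ_{i ∈ ℤ} f_i D^i` (with
`f_i = 0` for all sufficiently large `i`) is encoded by its coefficient
function `f : ℤ → 𝒜`.  Multiplication is determined by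
`(f D^i)·(g D^j) = Σ_{r ≥ 0} binom(i,r) f D^r(g) D^{i+j-r}`.
-/

namespace TwoBKP

/-- The generalized binomial coefficient `binom(i,r) = i(i−1)⋯(i−r+1)/r! ∈ ℤ`
for an integer upper index `i` and `r : ℕ`. -/
noncomputable def zchoose (i : ℤ) (r : ℕ) : ℤ := Ring.choose i r

variable {A : Type*} [CommRing A]

/-- `f : ℤ → 𝒜` represents an element of `𝒟⁻` iff its support is bounded above. -/
def IsPDO (f : ℤ → A) : Prop := ∃ N : ℤ, ∀ i : ℤ, N < i → f i = 0

/-- The product in `𝒟⁻`, coefficientwise: the coefficient of `D^n` in `A·B` is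
`Σ_{i+j-r=n, r≥0} binom(i,r) f_i D^r(g_j)`. -/
noncomputable def pmul (D : A → A) (f g : ℤ → A) : ℤ → A := fun n =>
  ∑ᶠ p : ℤ × ℤ,
    if 0 ≤ p.1 + p.2 - n then
      zchoose p.1 (p.1 + p.2 - n).toNat • (f p.1 * D^[(p.1 + p.2 - n).toNat] (g p.2))
    else 0

/-- The unit `1 = 1·D⁰` of `𝒟⁻`. -/
def pone : ℤ → A := fun n => if n = 0 then (1 : A) else 0

/-- The monomial `D^k` (in particular `pD 1 = D` and `pD (-1) = D⁻¹`). -/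
def pD (k : ℤ) : ℤ → A := fun n => if n = k then (1 : A) else 0

/-- The multiplication operator `a·D⁰` attached to `a ∈ 𝒜`. -/
def sc (a : A) : ℤ → A := fun n => if n = 0 then a else 0

/-- The nonnegative (differential-operator) part `A₊ = Σ_{i≥0} f_i D^i`. -/
def posPart (f : ℤ → A) : ℤ → A := fun n => if 0 ≤ n then f n else 0

/-- The negative part `A₋ = Σ_{i<0} f_i D^i`. -/
def negPart (f : ℤ → A) : ℤ → A := fun n => if n < 0 then f n else 0

/-- The residue `res A = f_{-1}`. -/
def res (f : ℤ → A) : A := f (-1)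

/-- The adjoint `A* = Σ_i (−D)^i ∘ f_i` computed in `𝒟⁻`, coefficientwise:
the coefficient of `D^n` in `A*` is `Σ_{i ≥ n} (−1)^i binom(i, i−n) D^{i−n}(f_i)`. -/
noncomputable def adj (D : A → A) (f : ℤ → A) : ℤ → A := fun n =>
  ∑ᶠ i : ℤ,
    if 0 ≤ i - n then
      ((-1 : ℤ) ^ i.natAbs * zchoose i (i - n).toNat) • D^[(i - n).toNat] (f i)
    else 0

/-- Powers in `𝒟⁻`. -/
noncomputable def ppow (D : A → A) (f : ℤ → A) : ℕ → ℤ → A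
  | 0 => pone
  | k + 1 => pmul D f (ppow D f k)

/-- The action of a differential operator `Σ_{i≥0} f_i D^i` on an element of `𝒜`. -/
noncomputable def papply (D : A → A) (f : ℤ → A) (a : A) : A :=
  ∑ᶠ i : ℤ, if 0 ≤ i then f i * D^[i.toNat] a else 0

/-- Conjugation by `D`:  `A ↦ D·A·D⁻¹`. -/
noncomputable def conjD (D : A → A) (f : ℤ → A) : ℤ → A :=
  pmul D (pD 1) (pmul D f (pD (-1)))

end TwoBKP

/-!
Only finitely many coefficients of `A` and `B` enter a given coefficient of `A*`, `A·B` or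
`B*·A*`, and each enters additively, so both identities reduce to monomials `a D^i`, `b D^j`.
There they are binomial identities over `ℤ`. By upper negation the coefficient of `D^l f_{n+l}`
in the `D^n`-coefficient of `A*` is `(-1)^n binom(-n-1, l)`. Involutivity then becomes the
Chu–Vandermonde identity `Σ_{l+u=k} binom(-n-1, l) binom(n+k, u) = binom(k-1, k) = δ_{k,0}`. For
products, after the Leibniz rule both sides give `D^s a · D^t b` the coefficient
`(-1)^{i+j} binom(n+s, s) binom(j, t)`, each time by Chu–Vandermonde.
-/

open Finset

theorem Finset.Nat.sum_antidiagonal_sum_antidiagonal_assoc {M : Type*} [AddCommMonoid M]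
    (k : ℕ) (F : ℕ → ℕ → ℕ → M) :
    ∑ x ∈ antidiagonal k, ∑ y ∈ antidiagonal x.1, F y.1 y.2 x.2 =
      ∑ x ∈ antidiagonal k, ∑ y ∈ antidiagonal x.2, F x.1 y.1 y.2 := by
  rw [sum_sigma', sum_sigma']
  refine sum_nbij' (fun p => ⟨(p.2.1, p.2.2 + p.1.2), (p.2.2, p.1.2)⟩)
    (fun p => ⟨(p.1.1 + p.2.1, p.2.2), (p.1.1, p.2.1)⟩) ?_ ?_ ?_ ?_ (fun _ _ => rfl) <;>
  · rintro ⟨⟨a, b⟩, ⟨c, d⟩⟩ h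
    simp only [mem_sigma, HasAntidiagonal.mem_antidiagonal] at h ⊢
    obtain ⟨rfl, rfl⟩ := h
    simp [add_assoc]

theorem Derivation.iterate_leibniz {R A : Type*} [CommSemiring R] [CommSemiring A] [Algebra R A]
    (D : Derivation R A A) (n : ℕ) (a b : A) :
    (⇑D)^[n] (a * b) =
      ∑ x ∈ antidiagonal n, n.choose x.1 • ((⇑D)^[x.1] a * (⇑D)^[x.2] b) := by
  induction n with
  | zero => simp
  | succ n ih =>
    rw [sum_antidiagonal_choose_succ_nsmul (fun i j => (⇑D)^[i] a * (⇑D)^[j] b) n,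
      Function.iterate_succ_apply', ih, map_sum, add_comm, ← sum_add_distrib]
    refine sum_congr rfl fun x hx => ?_
    rw [map_nsmul, Derivation.leibniz, smul_add,
      Nat.choose_symm_of_eq_add (HasAntidiagonal.mem_antidiagonal.1 hx).symm]
    simp only [smul_eq_mul, Function.iterate_succ_apply']
    ring

theorem iterate_map_sum {A F ι : Type*} [AddCommMonoid A] [FunLike F A A]
    [AddMonoidHomClass F A A] (D : F) (k : ℕ) (s : Finset ι) (x : ι → A) :
    (⇑D)^[k] (∑ i ∈ s, x i) = ∑ i ∈ s, (⇑D)^[k] (x i) :=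
  map_sum (⟨⟨(⇑D)^[k], iterate_map_zero D k⟩, iterate_map_add D k⟩ : A →+ A) x s

theorem Int.neg_one_pow_natAbs (n : ℤ) : (-1 : ℤ) ^ n.natAbs = n.negOnePow := by
  rw [← Int.coe_negOnePow_natCast, Int.natCast_natAbs, Int.negOnePow_abs]

theorem Int.ringChoose_neg_sub_one (x : ℤ) (s : ℕ) :
    Ring.choose (-x - 1) s = (s : ℤ).negOnePow * Ring.choose (x + s) s := by
  rw [show -x - 1 = -(x + 1) by ring, Ring.choose_neg, add_sub_right_comm, add_sub_cancel_right,
    Units.smul_def, smul_eq_mul]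

theorem Int.ringChoose_natCast_sub_one_self (k : ℕ) :
    Ring.choose ((k : ℤ) - 1) k = if k = 0 then 1 else 0 := by
  cases k with
  | zero => simp
  | succ k => simp [Ring.choose_natCast]

namespace TwoBKP

/-- The coefficient of `D^l (f_{n+l})` in the `D^n`-coefficient of `A*`. -/
noncomputable def adjCoeff (n : ℤ) (l : ℕ) : ℤ := (-1) ^ (n + l).natAbs * zchoose (n + l) l

theorem adjCoeff_eq (n : ℤ) (l : ℕ) :
    adjCoeff n l = n.negOnePow * Ring.choose (-n - 1) l := by
  rw [adjCoeff, zchoose, Int.neg_one_pow_natAbs, Int.ringChoose_neg_sub_one, Int.negOnePow_add]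
  push_cast
  ring

theorem sum_antidiagonal_adjCoeff_mul_adjCoeff (n : ℤ) (k : ℕ) :
    ∑ x ∈ antidiagonal k, adjCoeff n x.1 * adjCoeff (n + x.1) x.2 = if k = 0 then 1 else 0 := by
  have hterm : ∀ x ∈ antidiagonal k, adjCoeff n x.1 * adjCoeff (n + x.1) x.2 =
      n.negOnePow * (n + k).negOnePow * (Ring.choose (-n - 1) x.1 * Ring.choose (n + k) x.2) := by
    intro x hx
    rw [← HasAntidiagonal.mem_antidiagonal.1 hx, adjCoeff_eq, adjCoeff, zchoose,
      Int.neg_one_pow_natAbs]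
    push_cast
    ring_nf
  rw [sum_congr rfl hterm, ← mul_sum, ← Ring.add_choose_eq k (Commute.all _ _),
    show -n - 1 + (n + k) = (k : ℤ) - 1 by ring, Int.ringChoose_natCast_sub_one_self]
  split_ifs with hk
  · subst hk
    simp [← Units.val_mul]
  · simp

theorem sum_antidiagonal_adjCoeff_mul_choose {n i j : ℤ} {s t : ℕ} (h : i + j = n + s + t) :
    ∑ y ∈ antidiagonal t, adjCoeff n (s + y.1) * ((s + y.1).choose s * zchoose i y.2) =
      (i + j).negOnePow * (Ring.choose (n + s) s * zchoose j t) := by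
  have hterm : ∀ y ∈ antidiagonal t,
      adjCoeff n (s + y.1) * ((s + y.1).choose s * zchoose i y.2) = n.negOnePow *
        Ring.choose (-n - 1) s * (Ring.choose (-n - 1 - s) y.1 * Ring.choose i y.2) := by
    intro y _
    have hsplit := Ring.choose_smul_choose (-n - 1) (Nat.le_add_right s y.1)
    rw [nsmul_eq_mul, Nat.add_sub_cancel_left] at hsplit
    rw [adjCoeff_eq, zchoose, ← mul_assoc, mul_assoc _ (Ring.choose _ _),
      mul_comm (Ring.choose _ _), hsplit]
    ring
  rw [sum_congr rfl hterm, ← mul_sum, ← Ring.add_choose_eq t (Commute.all _ _),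
    show -n - 1 - s + i = -(j - t) - 1 by omega, Int.ringChoose_neg_sub_one,
    Int.ringChoose_neg_sub_one, sub_add_cancel, zchoose, show i + j = n + s + t by omega,
    Int.negOnePow_add, Int.negOnePow_add]
  push_cast
  ring

section Coefficients

variable {A F : Type*} [CommRing A] [FunLike F A A] [AddMonoidHomClass F A A] (D : F)

theorem adj_single_apply (i : ℤ) (a : A) (n : ℤ) :
    adj D (Pi.single i a) n =
      if 0 ≤ i - n then ((-1) ^ i.natAbs * zchoose i (i - n).toNat) • (⇑D)^[(i - n).toNat] a
      else 0 := by
  rw [adj, finsum_eq_single _ i fun j hj => by simp [hj]]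
  simp

theorem adj_single_apply_sub (i : ℤ) (l : ℕ) (a : A) :
    adj D (Pi.single i a) (i - l) = ((-1) ^ i.natAbs * zchoose i l) • (⇑D)^[l] a := by
  simp [adj_single_apply]

theorem adj_single_add_apply (n : ℤ) (l : ℕ) (a : A) :
    adj D (Pi.single (n + l) a) n = adjCoeff n l • (⇑D)^[l] a := by
  simp [adj_single_apply, adjCoeff]

theorem adj_single_sum {ι : Type*} (i : ℤ) (s : Finset ι) (a : ι → A) (n : ℤ) :
    adj D (Pi.single i (∑ x ∈ s, a x)) n = ∑ x ∈ s, adj D (Pi.single i (a x)) n := by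
  simp only [adj_single_apply]
  split_ifs <;> simp [iterate_map_sum, smul_sum]

theorem adj_apply_eq_sum_single {h : ℤ → A} {N : ℤ} (hN : ∀ i, N < i → h i = 0) {n : ℤ}
    {s : Finset ℤ} (hs : Icc n N ⊆ s) :
    adj D h n = ∑ i ∈ s, adj D (Pi.single i (h i)) n := by
  rw [adj, finsum_eq_sum_of_support_subset _ fun i hi => hs ?_]
  · simp only [adj_single_apply]
  · rw [Function.mem_support] at hi
    by_contra hi'
    rw [mem_Icc, not_and_or, not_le, not_le] at hi'
    rcases hi' with hin | hNi
    · exact hi (if_neg (by omega))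
    · exact hi (by simp [hN i hNi])

theorem adj_apply_eq_zero_of_lt {h : ℤ → A} {N : ℤ} (hN : ∀ i, N < i → h i = 0) {n : ℤ}
    (hn : N < n) : adj D h n = 0 := by
  rw [adj_apply_eq_sum_single D hN (Icc_eq_empty_of_lt hn).le, sum_empty]

theorem adj_single_apply_of_lt {i n : ℤ} (h : i < n) (a : A) : adj D (Pi.single i a) n = 0 :=
  adj_apply_eq_zero_of_lt D (fun _ hj => by simp [hj.ne']) h

theorem adj_apply_eq_sum_antidiagonal {h : ℤ → A} {n : ℤ} {k : ℕ}
    (hN : ∀ i, n + k < i → h i = 0) :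
    adj D h n = ∑ x ∈ antidiagonal k, adjCoeff n x.1 • (⇑D)^[x.1] (h (n + x.1)) := by
  let up : ℕ ↪ ℤ := ⟨fun l => n + l, fun _ _ h => by simpa using h⟩
  rw [adj_apply_eq_sum_single D hN (s := (range (k + 1)).map up), sum_map,
    Nat.sum_antidiagonal_eq_sum_range_succ fun l _ => adjCoeff n l • (⇑D)^[l] (h (n + l))]
  · exact sum_congr rfl fun l _ => adj_single_add_apply D n l _
  · intro m hm
    rw [mem_Icc] at hm
    simp only [mem_map, mem_range]
    exact ⟨(m - n).toNat, by omega, show n + _ = m by omega⟩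

theorem pmul_single_single_apply (p q : ℤ) (a b : A) (n : ℤ) :
    pmul D (Pi.single p a) (Pi.single q b) n =
      if 0 ≤ p + q - n then zchoose p (p + q - n).toNat • (a * (⇑D)^[(p + q - n).toNat] b)
      else 0 := by
  rw [pmul, finsum_eq_single _ (p, q) ?_]
  · simp
  rintro ⟨x, y⟩ hxy
  rw [Ne, Prod.mk.injEq, not_and_or] at hxy
  rcases hxy with h | h <;> simp [h]

theorem pmul_single_single_apply_of_add_eq {p q n : ℤ} {r : ℕ} (h : p + q = n + r) (a b : A) :
    pmul D (Pi.single p a) (Pi.single q b) n = zchoose p r • (a * (⇑D)^[r] b) := by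
  rw [pmul_single_single_apply, if_pos (by omega), show (p + q - n).toNat = r by omega]

theorem pmul_single_single_apply_of_lt {p q n : ℤ} (h : p + q < n) (a b : A) :
    pmul D (Pi.single p a) (Pi.single q b) n = 0 := by
  rw [pmul_single_single_apply, if_neg (by omega)]

theorem pmul_single_sum_single_sum {ι κ : Type*} (p q : ℤ) (s : Finset ι) (t : Finset κ)
    (a : ι → A) (b : κ → A) (n : ℤ) :
    pmul D (Pi.single p (∑ x ∈ s, a x)) (Pi.single q (∑ y ∈ t, b y)) n =
      ∑ x ∈ s, ∑ y ∈ t, pmul D (Pi.single p (a x)) (Pi.single q (b y)) n := by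
  simp only [pmul_single_single_apply]
  split_ifs <;> simp [iterate_map_sum, sum_mul_sum, smul_sum]

theorem pmul_apply_eq_sum_single {f g : ℤ → A} {Nf Ng : ℤ} (hf : ∀ i, Nf < i → f i = 0)
    (hg : ∀ i, Ng < i → g i = 0) {n : ℤ} {s t : Finset ℤ} (hs : Icc (n - Ng) Nf ⊆ s)
    (ht : Icc (n - Nf) Ng ⊆ t) :
    pmul D f g n = ∑ p ∈ s, ∑ q ∈ t, pmul D (Pi.single p (f p)) (Pi.single q (g q)) n := by
  rw [pmul, finsum_eq_sum_of_support_subset (s := s ×ˢ t) _ ?_, sum_product]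
  · simp only [pmul_single_single_apply]
  · rintro ⟨p, q⟩ hpq
    rw [Function.mem_support] at hpq
    have hn : 0 ≤ p + q - n := by_contra fun h => hpq (if_neg h)
    have hp : p ≤ Nf := by_contra fun h => hpq (by simp [hf p (by omega)])
    have hq : q ≤ Ng := by_contra fun h => hpq (by simp [hg q (by omega)])
    rw [coe_product, Set.mem_prod]
    exact ⟨hs (mem_Icc.2 ⟨by omega, hp⟩), ht (mem_Icc.2 ⟨by omega, hq⟩)⟩

theorem pmul_apply_eq_zero_of_lt {f g : ℤ → A} {Nf Ng : ℤ} (hf : ∀ i, Nf < i → f i = 0)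
    (hg : ∀ i, Ng < i → g i = 0) {n : ℤ} (hn : Nf + Ng < n) : pmul D f g n = 0 := by
  rw [pmul_apply_eq_sum_single D hf hg (Icc_eq_empty_of_lt (by omega)).le subset_rfl, sum_empty]

theorem pmul_apply_eq_sum_antidiagonal {f g : ℤ → A} {P Q n : ℤ} {k : ℕ}
    (hf : ∀ i, P < i → f i = 0) (hg : ∀ i, Q < i → g i = 0) (hk : P + Q = n + k) :
    pmul D f g n = ∑ x ∈ antidiagonal k, ∑ y ∈ antidiagonal x.2,
      zchoose (P - x.1) y.2 • (f (P - x.1) * (⇑D)^[y.2] (g (Q - y.1))) := by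
  let down (c : ℤ) : ℕ ↪ ℤ := ⟨fun l => c - l, fun _ _ h => by simpa using h⟩
  have hdown (c : ℤ) : Icc (c - k) c ⊆ (range (k + 1)).map (down c) := by
    intro m hm
    rw [mem_Icc] at hm
    simp only [mem_map, mem_range]
    exact ⟨(c - m).toNat, by omega, show c - _ = m by omega⟩
  rw [pmul_apply_eq_sum_single D hf hg ((Icc_subset_Icc_left (by omega)).trans (hdown P))
    ((Icc_subset_Icc_left (by omega)).trans (hdown Q)), sum_map,
    Nat.sum_antidiagonal_eq_sum_range_succ (fun l w => ∑ y ∈ antidiagonal w,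
      zchoose (P - l) y.2 • (f (P - l) * (⇑D)^[y.2] (g (Q - y.1))))]
  refine sum_congr rfl fun l hl => ?_
  rw [mem_range] at hl
  rw [sum_map, Nat.sum_antidiagonal_eq_sum_range_succ (fun u r =>
      zchoose (P - l) r • (f (P - l) * (⇑D)^[r] (g (Q - u)))),
    ← sum_subset (range_subset_range.2 (by omega : k - l + 1 ≤ k + 1))]
  · refine sum_congr rfl fun u hu => ?_
    rw [mem_range] at hu
    exact pmul_single_single_apply_of_add_eq D (show P - l + (Q - u) = _ by omega) _ _
  · intro u _ hu
    rw [mem_range] at hu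
    exact (pmul_single_single_apply D _ _ _ _ n).trans
      (if_neg (show ¬ 0 ≤ P - l + (Q - u) - n by omega))

end Coefficients

section Monomials

theorem adj_adj_single {A F : Type*} [CommRing A] [FunLike F A A] [AddMonoidHomClass F A A]
    (D : F) (i : ℤ) (a : A) : adj D (adj D (Pi.single i a)) = Pi.single i a := by
  funext n
  rcases lt_or_ge i n with hn | hn
  · rw [adj_apply_eq_zero_of_lt D (fun _ h => adj_single_apply_of_lt D h a) hn,
      Pi.single_eq_of_ne hn.ne']
  · obtain ⟨k, rfl⟩ : ∃ k : ℕ, i = n + k := ⟨(i - n).toNat, by omega⟩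
    rw [adj_apply_eq_sum_antidiagonal D fun _ h => adj_single_apply_of_lt D h a]
    calc _ = ∑ x ∈ antidiagonal k, (adjCoeff n x.1 * adjCoeff (n + x.1) x.2) • (⇑D)^[k] a :=
          sum_congr rfl fun x hx => by
            rw [← HasAntidiagonal.mem_antidiagonal.1 hx, Nat.cast_add, ← add_assoc,
              adj_single_add_apply, iterate_map_zsmul, ← Function.iterate_add_apply, smul_smul]
      _ = _ := by
        rw [← sum_smul, sum_antidiagonal_adjCoeff_mul_adjCoeff]
        rcases eq_or_ne k 0 with rfl | hk
        · simp
        · rw [if_neg hk, zero_smul, Pi.single_eq_of_ne (by omega)]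

variable {A : Type*} [CommRing A] (D : Derivation ℤ A A)

theorem adj_pmul_single_single_apply {i j n : ℤ} {k : ℕ} (hk : i + j = n + k) (a b : A) :
    adj D (pmul D (Pi.single i a) (Pi.single j b)) n =
      ∑ x ∈ antidiagonal k,
        ((i + j).negOnePow * (Ring.choose (n + x.1) x.1 * zchoose j x.2)) •
          ((⇑D)^[x.1] a * (⇑D)^[x.2] b) := by
  rw [adj_apply_eq_sum_antidiagonal D (k := k) fun m hm =>
    pmul_single_single_apply_of_lt D (show i + j < m by omega) a b]
  calc _ = ∑ x ∈ antidiagonal k, ∑ y ∈ antidiagonal x.1,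
        (adjCoeff n (y.1 + y.2) * ((y.1 + y.2).choose y.1 * zchoose i x.2)) •
          ((⇑D)^[y.1] a * (⇑D)^[y.2 + x.2] b) := by
        refine sum_congr rfl fun x hx => ?_
        rw [pmul_single_single_apply_of_add_eq D (r := x.2)
            (by rw [hk, ← HasAntidiagonal.mem_antidiagonal.1 hx]; push_cast; ring),
          iterate_map_zsmul, Derivation.iterate_leibniz, smul_sum, smul_sum]
        refine sum_congr rfl fun y hy => ?_
        rw [← HasAntidiagonal.mem_antidiagonal.1 hy, Function.iterate_add_apply,
          ← natCast_zsmul, smul_smul, smul_smul]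
        congr 1
        ring
    _ = ∑ x ∈ antidiagonal k, ∑ y ∈ antidiagonal x.2,
        (adjCoeff n (x.1 + y.1) * ((x.1 + y.1).choose x.1 * zchoose i y.2)) •
          ((⇑D)^[x.1] a * (⇑D)^[y.1 + y.2] b) :=
      Nat.sum_antidiagonal_sum_antidiagonal_assoc k fun s v u =>
        (adjCoeff n (s + v) * ((s + v).choose s * zchoose i u)) •
          ((⇑D)^[s] a * (⇑D)^[v + u] b)
    _ = ∑ x ∈ antidiagonal k, (∑ y ∈ antidiagonal x.2,
        adjCoeff n (x.1 + y.1) * ((x.1 + y.1).choose x.1 * zchoose i y.2)) •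
          ((⇑D)^[x.1] a * (⇑D)^[x.2] b) := by
      refine sum_congr rfl fun x _ => ?_
      rw [sum_smul]
      exact sum_congr rfl fun y hy => by rw [HasAntidiagonal.mem_antidiagonal.1 hy]
    _ = _ := by
      refine sum_congr rfl fun x hx => ?_
      rw [sum_antidiagonal_adjCoeff_mul_choose]
      rw [hk, ← HasAntidiagonal.mem_antidiagonal.1 hx]
      push_cast
      ring

theorem pmul_adj_single_adj_single_apply {i j n : ℤ} {k : ℕ} (hk : i + j = n + k) (a b : A) :
    pmul D (adj D (Pi.single j b)) (adj D (Pi.single i a)) n =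
      ∑ x ∈ antidiagonal k,
        ((i + j).negOnePow * (Ring.choose (n + x.1) x.1 * zchoose j x.2)) •
          ((⇑D)^[x.1] a * (⇑D)^[x.2] b) := by
  rw [pmul_apply_eq_sum_antidiagonal D (fun _ h => adj_single_apply_of_lt D h b)
    (fun _ h => adj_single_apply_of_lt D h a) (show j + i = n + k by omega)]
  conv_rhs => rw [← Nat.sum_antidiagonal_swap]
  refine sum_congr rfl fun x hx => ?_
  calc _ = ∑ y ∈ antidiagonal x.2,
        ((-1) ^ j.natAbs * zchoose j x.1 * (-1) ^ i.natAbs *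
          (Ring.choose i y.1 * Ring.choose (j - x.1) y.2)) •
            ((⇑D)^[x.1] b * (⇑D)^[x.2] a) := by
        refine sum_congr rfl fun y hy => ?_
        rw [adj_single_apply_sub, adj_single_apply_sub, iterate_map_zsmul,
          ← Function.iterate_add_apply, add_comm, HasAntidiagonal.mem_antidiagonal.1 hy,
          smul_mul_smul_comm, smul_smul, zchoose, zchoose, zchoose]
        ring_nf
    _ = _ := by
      rw [← sum_smul, ← mul_sum, ← Ring.add_choose_eq _ (Commute.all _ _), Prod.fst_swap,
        Prod.snd_swap, mul_comm ((⇑D)^[x.1] b),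
        show i + (j - x.1) = n + x.2 by
          rw [← HasAntidiagonal.mem_antidiagonal.1 hx, Nat.cast_add] at hk; omega,
        Int.negOnePow_add, Units.val_mul, ← Int.neg_one_pow_natAbs, ← Int.neg_one_pow_natAbs]
      congr 1
      ring

theorem adj_pmul_single_single (i j : ℤ) (a b : A) :
    adj D (pmul D (Pi.single i a) (Pi.single j b)) =
      pmul D (adj D (Pi.single j b)) (adj D (Pi.single i a)) := by
  funext n
  rcases lt_or_ge (i + j) n with hn | hn
  · rw [adj_apply_eq_zero_of_lt D (fun m hm => pmul_single_single_apply_of_lt D hm a b) hn,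
      pmul_apply_eq_zero_of_lt D (fun _ h => adj_single_apply_of_lt D h b)
        (fun _ h => adj_single_apply_of_lt D h a) (by omega)]
  · obtain ⟨k, hk⟩ : ∃ k : ℕ, i + j = n + k := ⟨(i + j - n).toNat, by omega⟩
    rw [adj_pmul_single_single_apply D hk, pmul_adj_single_adj_single_apply D hk]

end Monomials

section Reduction

variable {A F : Type*} [CommRing A] [FunLike F A A] [AddMonoidHomClass F A A] (D : F)

theorem adj_adj_apply_eq_sum_single {f : ℤ → A} {N : ℤ} (hf : ∀ i, N < i → f i = 0)
    (n : ℤ) : adj D (adj D f) n = ∑ i ∈ Icc n N, adj D (adj D (Pi.single i (f i))) n := by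
  set W := Icc n N
  calc adj D (adj D f) n
      = ∑ m ∈ W, adj D (Pi.single m (∑ i ∈ W, adj D (Pi.single i (f i)) m)) n := by
        rw [adj_apply_eq_sum_single D (fun _ h => adj_apply_eq_zero_of_lt D hf h) subset_rfl]
        refine sum_congr rfl fun m hm => ?_
        rw [adj_apply_eq_sum_single D hf (Icc_subset_Icc_left (mem_Icc.1 hm).1)]
    _ = ∑ i ∈ W, ∑ m ∈ W, adj D (Pi.single m (adj D (Pi.single i (f i)) m)) n := by
        simp_rw [adj_single_sum]
        exact sum_comm
    _ = _ := sum_congr rfl fun i hi => (adj_apply_eq_sum_single D (N := N)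
        (fun _ h => adj_single_apply_of_lt D (by linarith [(mem_Icc.1 hi).2]) _) subset_rfl).symm

theorem adj_pmul_apply_eq_sum_single {f g : ℤ → A} {N : ℤ} (hf : ∀ i, N < i → f i = 0)
    (hg : ∀ i, N < i → g i = 0) (n : ℤ) :
    adj D (pmul D f g) n = ∑ i ∈ Icc (n - N) N, ∑ j ∈ Icc (n - N) N,
      adj D (pmul D (Pi.single i (f i)) (Pi.single j (g j))) n := by
  set W := Icc (n - N) N
  calc adj D (pmul D f g) n
      = ∑ m ∈ Icc n (N + N), adj D (Pi.single m (∑ i ∈ W, ∑ j ∈ W,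
          pmul D (Pi.single i (f i)) (Pi.single j (g j)) m)) n := by
        rw [adj_apply_eq_sum_single D (fun _ h => pmul_apply_eq_zero_of_lt D hf hg h) subset_rfl]
        refine sum_congr rfl fun m hm => ?_
        have hW : Icc (m - N) N ⊆ W := Icc_subset_Icc_left (by linarith [(mem_Icc.1 hm).1])
        rw [pmul_apply_eq_sum_single D hf hg hW hW]
    _ = ∑ i ∈ W, ∑ j ∈ W, ∑ m ∈ Icc n (N + N),
          adj D (Pi.single m (pmul D (Pi.single i (f i)) (Pi.single j (g j)) m)) n := by
        simp_rw [adj_single_sum]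
        rw [sum_comm]
        exact sum_congr rfl fun i _ => sum_comm
    _ = _ := sum_congr rfl fun i hi => sum_congr rfl fun j hj =>
        (adj_apply_eq_sum_single D (fun _ h => pmul_single_single_apply_of_lt D
          (by linarith [(mem_Icc.1 hi).2, (mem_Icc.1 hj).2]) _ _) subset_rfl).symm

theorem pmul_adj_adj_apply_eq_sum_single {f g : ℤ → A} {N : ℤ} (hf : ∀ i, N < i → f i = 0)
    (hg : ∀ i, N < i → g i = 0) (n : ℤ) :
    pmul D (adj D g) (adj D f) n = ∑ i ∈ Icc (n - N) N, ∑ j ∈ Icc (n - N) N,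
      pmul D (adj D (Pi.single j (g j))) (adj D (Pi.single i (f i))) n := by
  set W := Icc (n - N) N
  have hvan {i : ℤ} (hi : i ∈ W) (c : A) : ∀ m, N < m → adj D (Pi.single i c) m = 0 :=
    fun _ hm => adj_single_apply_of_lt D (by linarith [(mem_Icc.1 hi).2]) c
  calc pmul D (adj D g) (adj D f) n
      = ∑ p ∈ W, ∑ q ∈ W, pmul D (Pi.single p (∑ j ∈ W, adj D (Pi.single j (g j)) p))
          (Pi.single q (∑ i ∈ W, adj D (Pi.single i (f i)) q)) n := by
        rw [pmul_apply_eq_sum_single D (fun _ h => adj_apply_eq_zero_of_lt D hg h)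
          (fun _ h => adj_apply_eq_zero_of_lt D hf h) subset_rfl subset_rfl]
        refine sum_congr rfl fun p hp => sum_congr rfl fun q hq => ?_
        rw [adj_apply_eq_sum_single D hg (s := W)
            (Icc_subset_Icc_left (by linarith [(mem_Icc.1 hp).1])),
          adj_apply_eq_sum_single D hf (s := W)
            (Icc_subset_Icc_left (by linarith [(mem_Icc.1 hq).1]))]
    _ = ∑ j ∈ W, ∑ i ∈ W, ∑ p ∈ W, ∑ q ∈ W,
          pmul D (Pi.single p (adj D (Pi.single j (g j)) p))
            (Pi.single q (adj D (Pi.single i (f i)) q)) n := by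
        simp_rw [pmul_single_sum_single_sum]
        refine (sum_congr rfl fun p _ =>
          sum_comm.trans (sum_congr rfl fun j _ => sum_comm)).trans ?_
        rw [sum_comm]
        exact sum_congr rfl fun j _ => sum_comm
    _ = ∑ j ∈ W, ∑ i ∈ W,
          pmul D (adj D (Pi.single j (g j))) (adj D (Pi.single i (f i))) n :=
        sum_congr rfl fun j hj => sum_congr rfl fun i hi =>
          (pmul_apply_eq_sum_single D (hvan hj _) (hvan hi _) subset_rfl subset_rfl).symm
    _ = _ := sum_comm

end Reduction

end TwoBKP

open TwoBKP in
theorem adj_involutive_antiautomorphism {A : Type*} [CommRing A]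
    (D : Derivation ℤ A A) (f g : ℤ → A) (hf : IsPDO f) (hg : IsPDO g) :
    adj ⇑D (adj ⇑D f) = f ∧
    adj ⇑D (pmul ⇑D f g) = pmul ⇑D (adj ⇑D g) (adj ⇑D f) := by
  obtain ⟨Nf, hNf⟩ := hf
  obtain ⟨Ng, hNg⟩ := hg
  have hf' : ∀ i, max Nf Ng < i → f i = 0 := fun i hi => hNf i (by omega)
  have hg' : ∀ i, max Nf Ng < i → g i = 0 := fun i hi => hNg i (by omega)
  refine ⟨funext fun n => ?_, funext fun n => ?_⟩
  · rw [adj_adj_apply_eq_sum_single D hNf n]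
    simp_rw [adj_adj_single, Finset.sum_pi_single]
    split_ifs with hn
    · rfl
    · exact (hNf n (by simpa using hn)).symm
  · rw [adj_pmul_apply_eq_sum_single D hf' hg' n, pmul_adj_adj_apply_eq_sum_single D hf' hg' n]
    simp_rw [adj_pmul_single_single]
end

section
/- Let A, X ∈ 𝒟⁻ be pseudo-differential operators over a commutative differential ring (𝒜, D) with A anti-symmetric (A* = −A) and X symmetric (X* = X). Then the operator B := A·(X·A)₋ − (A·X)₋·A is anti-symmetric: B* = −B. (This shows that the quadratic Poisson tensor maps symmetric cotangent directions at an anti-symmetric point to anti-symmetric tangent directions, i.e. the Poisson structure restricts to the subspace of anti-symmetric operators.) -/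
/-!
Everything reduces to anti-multiplicativity `(F G)* = G* F*` of the adjoint on operators whose
coefficients vanish above some degree, together with `(F₋)* = (F*)₋`; the latter holds because
`binom(i, i - n) = 0` whenever `n < 0 ≤ i`. With `A* = -A` and `X* = X` they give
`(A (XA)₋)* = ((XA)*)₋ A* = (AX)₋ A` and `((AX)₋ A)* = A (XA)₋`, so `*` swaps the two terms of `B`.

Anti-multiplicativity is checked coefficient by coefficient on monomials. After the Leibniz rule,
the coefficient of `D^n` in both `(a D^i · b D^j)*` and `(b D^j)* (a D^i)*` becomes
`∑_{t ≤ K} (-1)^(i+j) binom(j, K - t) binom(n + t, t) D^t(a) D^(K-t)(b)` with `K = i + j - n`: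
on the left this takes upper negation and Vandermonde's identity, on the right Vandermonde alone.
-/

open Finset

namespace Ring

theorem choose_int_eq_neg_one_pow_mul (x : ℤ) (r : ℕ) :
    choose x r = (-1) ^ r * choose ((r : ℤ) - 1 - x) r := by
  have h := choose_neg (-x) r
  rw [neg_neg, Units.smul_def, Int.coe_negOnePow_natCast, smul_eq_mul] at h
  rw [h]
  congr 2
  ring

theorem sum_range_choose_mul_choose_int (x y : ℤ) (t : ℕ) :
    ∑ r ∈ range (t + 1), choose x r * choose y (t - r) = choose (x + y) t := by
  rw [add_choose_eq t (Commute.all x y), Nat.sum_antidiagonal_eq_sum_range_succ_mk]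

theorem sum_range_neg_one_pow_mul_choose_mul_choose (i x : ℤ) (u : ℕ) :
    ∑ r ∈ range (u + 1), (-1) ^ r * choose i r * choose (x - r) (u - r) = choose (x - i) u := by
  have upper_neg : ∀ r ∈ range (u + 1), (-1) ^ r * choose i r * choose (x - r) (u - r)
      = (-1) ^ u * (choose i r * choose ((u : ℤ) - 1 - x) (u - r)) := by
    intro r hr
    have hru : r ≤ u := Nat.lt_succ_iff.mp (mem_range.mp hr)
    rw [choose_int_eq_neg_one_pow_mul (x - r), Nat.cast_sub hru,
      show ((u : ℤ) - r - 1 - (x - r)) = u - 1 - x by ring,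
      show (-1 : ℤ) ^ u = (-1) ^ r * (-1) ^ (u - r) by rw [← pow_add, Nat.add_sub_cancel' hru]]
    ring
  rw [sum_congr rfl upper_neg, ← mul_sum, sum_range_choose_mul_choose_int,
    choose_int_eq_neg_one_pow_mul (x - i)]
  ring_nf

theorem choose_mul_choose_int (y : ℤ) {k m : ℕ} (hkm : k ≤ m) :
    (m.choose k : ℤ) * choose y m = choose y (m - k) * choose (y - (m - k : ℕ)) k := by
  have h := choose_smul_choose y (Nat.sub_le m k)
  rwa [nsmul_eq_mul, Nat.choose_symm hkm, Nat.sub_sub_self hkm] at h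

end Ring

theorem Int.neg_one_pow_natAbs_add (a b : ℤ) :
    (-1 : ℤ) ^ (a + b).natAbs = (-1) ^ a.natAbs * (-1) ^ b.natAbs := by
  simp only [← Int.coe_negOnePow ℤ, Int.negOnePow_add, Units.val_mul, Int.cast_mul]

theorem Int.neg_one_pow_natAbs_sub_natCast (a : ℤ) (r : ℕ) :
    (-1 : ℤ) ^ (a - r).natAbs = (-1) ^ a.natAbs * (-1) ^ r := by
  rw [sub_eq_add_neg, Int.neg_one_pow_natAbs_add, Int.natAbs_neg, Int.natAbs_natCast]

theorem Finset.sum_eq_sum_range_sub {M : Type*} [AddCommMonoid M] {s : Finset ℤ} {F : ℤ → M}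
    {a : ℤ} {K : ℕ} (hs : Icc (a - K) a ⊆ s) (hF : ∀ x ∈ s, x < a - K ∨ a < x → F x = 0) :
    ∑ x ∈ s, F x = ∑ r ∈ range (K + 1), F (a - r) := by
  rw [← sum_subset hs fun x hx hx' => hF x hx (by rw [mem_Icc] at hx'; omega)]
  exact sum_nbij' (fun x => (a - x).toNat) (fun r => a - r)
    (fun x hx => by simp only [mem_Icc, mem_range] at hx ⊢; omega)
    (fun r hr => by simp only [mem_Icc, mem_range] at hr ⊢; omega)
    (fun x hx => by rw [mem_Icc] at hx; omega)
    (fun r _ => by omega)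
    (fun x hx => by rw [mem_Icc] at hx; rw [show a - ((a - x).toNat : ℤ) = x by omega])

namespace Derivation

variable {R A : Type*} [CommSemiring R] [CommSemiring A] [Algebra R A]

theorem iterate_apply_mul (D : Derivation R A A) (n : ℕ) (a b : A) :
    D^[n] (a * b) = ∑ ij ∈ antidiagonal n, n.choose ij.1 • (D^[ij.1] a * D^[ij.2] b) := by
  induction n with
  | zero => simp
  | succ n ih =>
    rw [sum_antidiagonal_choose_succ_nsmul (M := A) (fun i j => D^[i] a * D^[j] b) n]
    simp only [Function.iterate_succ_apply', ih, map_sum, map_nsmul, leibniz, smul_eq_mul,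
      smul_add, sum_add_distrib]
    congr 1
    refine sum_congr rfl fun ⟨i, j⟩ hij => ?_
    rw [n.choose_symm_of_eq_add (mem_antidiagonal.1 hij).symm, mul_comm]

theorem iterate_apply_mul' (D : Derivation R A A) (n : ℕ) (a b : A) :
    D^[n] (a * b) = ∑ i ∈ range (n + 1), n.choose i • (D^[i] a * D^[n - i] b) := by
  rw [iterate_apply_mul D n a b]
  exact Nat.sum_antidiagonal_eq_sum_range_succ (fun i j => n.choose i • (D^[i] a * D^[j] b)) n

theorem iterate_sub_apply_mul_iterate (D : Derivation R A A) {r K : ℕ} (hr : r ≤ K) (a b : A) :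
    D^[K - r] (a * D^[r] b) = ∑ t ∈ range (K + 1), (K - r).choose t • (D^[t] a * D^[K - t] b) := by
  rw [iterate_apply_mul', ← sum_subset (range_subset_range.mpr (by omega : K - r + 1 ≤ K + 1))
    fun t ht ht' => by
      rw [mem_range] at ht ht'; rw [Nat.choose_eq_zero_of_lt (by omega), zero_smul]]
  refine sum_congr rfl fun t ht => ?_
  rw [← Function.iterate_add_apply, show K - r - t + r = K - t by rw [mem_range] at ht; omega]

end Derivation

namespace TwoBKP

open Ring in
theorem sum_range_adj_mul_coeff (i j n : ℤ) {K t : ℕ} (hK : i + j - n = K) (ht : t ≤ K) :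
    ∑ r ∈ range (K + 1),
        (-1) ^ (i + j - r).natAbs * choose (i + j - r) (K - r) * choose i r * (K - r).choose t
      = (-1) ^ (i + j).natAbs * choose j (K - t) * choose (n + t) t := by
  rw [← sum_subset (range_subset_range.mpr (by omega : K - t + 1 ≤ K + 1)) fun r hr hr' => by
    rw [mem_range] at hr hr'; rw [Nat.choose_eq_zero_of_lt (by omega), Nat.cast_zero, mul_zero]]
  have chain : ∀ r ∈ range (K - t + 1),
      (-1) ^ (i + j - r).natAbs * choose (i + j - r) (K - r) * choose i r * (K - r).choose t
        = (-1) ^ (i + j).natAbs * choose (n + t) t *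
            ((-1) ^ r * choose i r * choose (i + j - r) (K - t - r)) := by
    intro r hr
    have hr : r ≤ K - t := Nat.lt_succ_iff.mp (mem_range.mp hr)
    have h := choose_mul_choose_int (i + j - r) (show t ≤ K - r by omega)
    rw [show K - r - t = K - t - r by omega,
      show i + j - r - ((K - t - r : ℕ) : ℤ) = n + t by omega] at h
    rw [Int.neg_one_pow_natAbs_sub_natCast]
    linear_combination (-1) ^ (i + j).natAbs * (-1) ^ r * choose i r * h
  rw [sum_congr rfl chain, ← mul_sum, sum_range_neg_one_pow_mul_choose_mul_choose,
    add_sub_cancel_left]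
  ring

variable {𝒜 : Type*} [CommRing 𝒜] (D : Derivation ℤ 𝒜 𝒜)

-- `adjTerm D n i a` and `mulTerm D n i j a b` are the coefficients of `D^n` in `(a D^i)*` and in
-- `(a D^i)(b D^j)`.
noncomputable def adjTerm (n i : ℤ) : 𝒜 →+ 𝒜 :=
  AddMonoidHom.mk' (fun a => if 0 ≤ i - n then
      ((-1 : ℤ) ^ i.natAbs * zchoose i (i - n).toNat) • (⇑D)^[(i - n).toNat] a else 0)
    fun a b => by split_ifs <;> simp only [iterate_map_add, smul_add, add_zero]

noncomputable def mulTerm (n i j : ℤ) : 𝒜 →+ 𝒜 →+ 𝒜 :=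
  AddMonoidHom.mk' (fun a => AddMonoidHom.mk' (fun b => if 0 ≤ i + j - n then
      zchoose i (i + j - n).toNat • (a * (⇑D)^[(i + j - n).toNat] b) else 0)
      fun b c => by split_ifs <;> simp only [iterate_map_add, mul_add, smul_add, add_zero])
    fun a b => by
      ext c
      simp only [AddMonoidHom.mk'_apply, AddMonoidHom.add_apply]
      split_ifs <;> simp only [add_mul, smul_add, add_zero]

theorem adj_apply (f : ℤ → 𝒜) (n : ℤ) : adj D f n = ∑ᶠ i, adjTerm D n i (f i) := rfl

theorem pmul_apply (f g : ℤ → 𝒜) (n : ℤ) :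
    pmul D f g n = ∑ᶠ p : ℤ × ℤ, mulTerm D n p.1 p.2 (f p.1) (g p.2) := rfl

variable {D} {n i j : ℤ}

theorem adjTerm_of_lt (h : i < n) (a : 𝒜) : adjTerm D n i a = 0 :=
  if_neg (by omega)

theorem adjTerm_of_eq {k : ℕ} (h : i - n = k) (a : 𝒜) :
    adjTerm D n i a = ((-1 : ℤ) ^ i.natAbs * zchoose i k) • (⇑D)^[k] a := by
  simp only [adjTerm, AddMonoidHom.mk'_apply, h, Int.toNat_natCast, if_pos (Int.natCast_nonneg k)]

theorem adjTerm_of_nonneg_of_neg (hi : 0 ≤ i) (hn : n < 0) (a : 𝒜) : adjTerm D n i a = 0 := by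
  lift i to ℕ using hi
  rw [adjTerm_of_eq (k := (i - n).toNat) (by omega), zchoose, Ring.choose_natCast,
    Nat.choose_eq_zero_of_lt (by omega), Nat.cast_zero, mul_zero, zero_smul]

theorem mulTerm_of_lt (h : i + j < n) (a b : 𝒜) : mulTerm D n i j a b = 0 :=
  if_neg (by omega)

theorem mulTerm_of_eq {k : ℕ} (h : i + j - n = k) (a b : 𝒜) :
    mulTerm D n i j a b = zchoose i k • (a * (⇑D)^[k] b) := by
  simp only [mulTerm, AddMonoidHom.mk'_apply, h, Int.toNat_natCast, if_pos (Int.natCast_nonneg k)]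

theorem negPart_of_neg {f : ℤ → 𝒜} (h : n < 0) : negPart f n = f n := if_pos h

theorem negPart_of_nonneg {f : ℤ → 𝒜} (h : 0 ≤ n) : negPart f n = 0 := if_neg (not_lt.2 h)

variable {f g : ℤ → 𝒜}

theorem adj_apply_eq_sum {N : ℤ} (hf : ∀ i, N < i → f i = 0) (n : ℤ) {s : Finset ℤ}
    (hs : Icc n N ⊆ s) : adj D f n = ∑ i ∈ s, adjTerm D n i (f i) := by
  refine finsum_eq_sum_of_support_subset (fun i => adjTerm D n i (f i))
    fun i hi => hs (mem_Icc.mpr ⟨?_, ?_⟩)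
  · by_contra h; exact hi (adjTerm_of_lt (by omega) _)
  · by_contra h; exact hi (by simp only [hf i (by omega), map_zero])

theorem adj_apply_of_lt {N : ℤ} (hf : ∀ i, N < i → f i = 0) (hn : N < n) : adj D f n = 0 := by
  rw [adj_apply_eq_sum hf n (s := ∅) (by rw [Icc_eq_empty_of_lt hn]), sum_empty]

theorem pmul_apply_eq_sum {Nf Ng : ℤ} (hf : ∀ i, Nf < i → f i = 0) (hg : ∀ j, Ng < j → g j = 0)
    (n : ℤ) {s : Finset (ℤ × ℤ)} (hs : ∀ i j, i ≤ Nf → j ≤ Ng → n ≤ i + j → (i, j) ∈ s) :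
    pmul D f g n = ∑ p ∈ s, mulTerm D n p.1 p.2 (f p.1) (g p.2) := by
  refine finsum_eq_sum_of_support_subset (fun p : ℤ × ℤ => mulTerm D n p.1 p.2 (f p.1) (g p.2))
    fun ⟨i, j⟩ hp => hs i j ?_ ?_ ?_
  · by_contra h; exact hp (by simp only [hf i (by omega), map_zero, AddMonoidHom.zero_apply])
  · by_contra h; exact hp (by simp only [hg j (by omega), map_zero])
  · by_contra h; exact hp (mulTerm_of_lt (by omega) _ _)

theorem pmul_apply_of_lt {Nf Ng : ℤ} (hf : ∀ i, Nf < i → f i = 0) (hg : ∀ j, Ng < j → g j = 0)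
    (hn : Nf + Ng < n) : pmul D f g n = 0 := by
  rw [pmul_apply_eq_sum hf hg n (s := ∅) fun i j _ _ _ => by omega, sum_empty]

theorem IsPDO.pmul (hf : IsPDO f) (hg : IsPDO g) : IsPDO (pmul D f g) :=
  let ⟨Nf, hNf⟩ := hf
  let ⟨Ng, hNg⟩ := hg
  ⟨Nf + Ng, fun _ hn => pmul_apply_of_lt hNf hNg hn⟩

theorem isPDO_negPart (f : ℤ → 𝒜) : IsPDO (negPart f) :=
  ⟨-1, fun _ hn => negPart_of_nonneg (by omega)⟩

variable (D) in
theorem pmul_neg_left (f g : ℤ → 𝒜) : pmul D (-f) g = -pmul D f g := by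
  funext n
  simp only [pmul_apply, Pi.neg_apply, map_neg, AddMonoidHom.neg_apply, finsum_neg_distrib]

variable (D) in
theorem pmul_neg_right (f g : ℤ → 𝒜) : pmul D f (-g) = -pmul D f g := by
  funext n
  simp only [pmul_apply, Pi.neg_apply, map_neg, finsum_neg_distrib]

theorem negPart_neg (f : ℤ → 𝒜) : negPart (-f) = -negPart f := by
  funext n
  simp only [negPart, Pi.neg_apply]
  split_ifs <;> simp

theorem adj_sub (hf : IsPDO f) (hg : IsPDO g) : adj D (f - g) = adj D f - adj D g := by
  obtain ⟨Nf, hNf⟩ := hf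
  obtain ⟨Ng, hNg⟩ := hg
  funext n
  have hfg : ∀ i, max Nf Ng < i → (f - g) i = 0 := fun i hi => by
    rw [Pi.sub_apply, hNf i (by omega), hNg i (by omega), sub_zero]
  rw [Pi.sub_apply, adj_apply_eq_sum hfg n subset_rfl,
    adj_apply_eq_sum hNf n (Icc_subset_Icc_right (le_max_left _ _)),
    adj_apply_eq_sum hNg n (Icc_subset_Icc_right (le_max_right _ _)), ← sum_sub_distrib]
  simp only [Pi.sub_apply, map_sub]

variable (D) in
theorem adj_negPart (f : ℤ → 𝒜) : adj D (negPart f) = negPart (adj D f) := by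
  funext n
  rcases lt_or_ge n 0 with hn | hn
  · rw [negPart_of_neg hn, adj_apply, adj_apply]
    refine finsum_congr fun i => ?_
    rcases lt_or_ge i 0 with hi | hi
    · rw [negPart_of_neg hi]
    · rw [adjTerm_of_nonneg_of_neg hi hn, adjTerm_of_nonneg_of_neg hi hn]
  · rw [negPart_of_nonneg hn, adj_apply]
    refine finsum_eq_zero_of_forall_eq_zero fun i => ?_
    rcases lt_or_ge i n with hi | hi
    · exact adjTerm_of_lt hi _
    · rw [negPart_of_nonneg (by omega), map_zero]

variable (D) in
noncomputable def adjMulTerm (n i j : ℤ) (a b : 𝒜) : 𝒜 :=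
  if 0 ≤ i + j - n then
    ∑ t ∈ range ((i + j - n).toNat + 1),
      ((-1 : ℤ) ^ (i + j).natAbs * zchoose j ((i + j - n).toNat - t) * zchoose (n + t) t) •
        ((⇑D)^[t] a * (⇑D)^[(i + j - n).toNat - t] b)
  else 0

theorem adjMulTerm_of_lt (h : i + j < n) (a b : 𝒜) : adjMulTerm D n i j a b = 0 :=
  if_neg (by omega)

theorem adjMulTerm_of_eq {K : ℕ} (h : i + j - n = K) (a b : 𝒜) :
    adjMulTerm D n i j a b = ∑ t ∈ range (K + 1),
      ((-1 : ℤ) ^ (i + j).natAbs * zchoose j (K - t) * zchoose (n + t) t) •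
        ((⇑D)^[t] a * (⇑D)^[K - t] b) := by
  simp only [adjMulTerm, h, Int.toNat_natCast, if_pos (Int.natCast_nonneg K)]

theorem sum_adjTerm_mulTerm {M : ℤ} (hM : i + j ≤ M) (a b : 𝒜) :
    ∑ m ∈ Icc n M, adjTerm D n m (mulTerm D m i j a b) = adjMulTerm D n i j a b := by
  rcases lt_or_ge (i + j) n with hK | hK
  · rw [adjMulTerm_of_lt hK]
    exact sum_eq_zero fun m hm => by
      rw [mem_Icc] at hm; rw [mulTerm_of_lt (by omega), map_zero]
  obtain ⟨K, hK⟩ : ∃ K : ℕ, i + j - n = K := ⟨(i + j - n).toNat, by omega⟩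
  have leibniz : ∀ r ∈ range (K + 1),
      adjTerm D n (i + j - r) (mulTerm D (i + j - r) i j a b) = ∑ t ∈ range (K + 1),
        ((-1) ^ (i + j - r).natAbs * zchoose (i + j - r) (K - r) * zchoose i r * (K - r).choose t) •
          ((⇑D)^[t] a * (⇑D)^[K - t] b) := by
    intro r hr
    have hr : r ≤ K := Nat.lt_succ_iff.mp (mem_range.mp hr)
    rw [mulTerm_of_eq (k := r) (by ring), map_zsmul,
      adjTerm_of_eq (k := K - r) (by omega),
      D.iterate_sub_apply_mul_iterate hr, smul_sum, smul_sum]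
    refine sum_congr rfl fun t _ => ?_
    rw [← Nat.cast_smul_eq_nsmul ℤ, smul_smul, smul_smul, mul_comm _ (zchoose i r), ← mul_assoc]
  rw [sum_eq_sum_range_sub (a := i + j) (K := K) (Icc_subset_Icc (by omega) hM) fun m hm hout => by
      rw [mem_Icc] at hm; rw [mulTerm_of_lt (by omega), map_zero],
    sum_congr rfl leibniz, sum_comm, adjMulTerm_of_eq hK]
  refine sum_congr rfl fun t ht => ?_
  rw [← sum_smul]
  exact congrArg (· • _) (sum_range_adj_mul_coeff i j n hK (by rw [mem_range] at ht; omega))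

theorem sum_mulTerm_adjTerm_adjTerm_sub {I : Finset ℤ} {K u : ℕ} (hK : i + j - n = K) (hu : u ≤ K)
    (hI : Icc (n - j) i ⊆ I) (a b : 𝒜) :
    ∑ q ∈ I, mulTerm D n (j - u) q (adjTerm D (j - u) j b) (adjTerm D q i a)
      = ((-1) ^ (i + j).natAbs * zchoose j u * zchoose (n + (K - u : ℕ)) (K - u)) •
          ((⇑D)^[K - u] a * (⇑D)^[u] b) := by
  have expand : ∀ v ∈ range (K - u + 1),
      mulTerm D n (j - u) (i - v) (adjTerm D (j - u) j b) (adjTerm D (i - v) i a)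
        = ((-1) ^ (i + j).natAbs * zchoose j u * (zchoose i v * zchoose (j - u) (K - u - v))) •
            ((⇑D)^[K - u] a * (⇑D)^[u] b) := by
    intro v hv
    have hv : v ≤ K - u := Nat.lt_succ_iff.mp (mem_range.mp hv)
    rw [adjTerm_of_eq (k := u) (by ring), adjTerm_of_eq (k := v) (by ring), map_zsmul, map_zsmul,
      AddMonoidHom.smul_apply, mulTerm_of_eq (k := K - u - v) (by omega),
      ← Function.iterate_add_apply, show K - u - v + v = K - u by omega, smul_smul, smul_smul,
      Int.neg_one_pow_natAbs_add, mul_comm ((⇑D)^[u] b)]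
    congr 1
    ring
  rw [sum_eq_sum_range_sub (a := i) (K := K - u) ((Icc_subset_Icc (by omega) le_rfl).trans hI)
      fun q _ hout => ?_]
  · rw [sum_congr rfl expand, ← sum_smul, ← mul_sum]
    unfold zchoose
    rw [Ring.sum_range_choose_mul_choose_int, show i + (j - u) = n + (K - u : ℕ) by omega]
  · rcases hout with h | h
    · exact mulTerm_of_lt (by omega) _ _
    · rw [adjTerm_of_lt h, map_zero]

theorem sum_mulTerm_adjTerm_adjTerm {I J : Finset ℤ} (hI : Icc (n - j) i ⊆ I)
    (hJ : Icc (n - i) j ⊆ J) (a b : 𝒜) :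
    ∑ p ∈ J ×ˢ I, mulTerm D n p.1 p.2 (adjTerm D p.1 j b) (adjTerm D p.2 i a)
      = adjMulTerm D n i j a b := by
  have vanish : ∀ p q, p + q < n ∨ j < p ∨ i < q →
      mulTerm D n p q (adjTerm D p j b) (adjTerm D q i a) = 0 := by
    rintro p q (h | h | h)
    · exact mulTerm_of_lt h _ _
    · rw [adjTerm_of_lt h, map_zero, AddMonoidHom.zero_apply]
    · rw [adjTerm_of_lt h, map_zero]
  rw [sum_product]
  rcases lt_or_ge (i + j) n with hK | hK
  · rw [adjMulTerm_of_lt hK]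
    exact sum_eq_zero fun p _ => sum_eq_zero fun q _ => vanish p q (by omega)
  obtain ⟨K, hK⟩ : ∃ K : ℕ, i + j - n = K := ⟨(i + j - n).toNat, by omega⟩
  rw [sum_eq_sum_range_sub (a := j) (K := K) ((Icc_subset_Icc (by omega) le_rfl).trans hJ)
      fun p _ hout => sum_eq_zero fun q _ => vanish p q (by omega),
    sum_congr rfl fun u hu =>
      sum_mulTerm_adjTerm_adjTerm_sub hK (Nat.lt_succ_iff.mp (mem_range.mp hu)) hI a b,
    adjMulTerm_of_eq hK, ← sum_range_reflect]
  refine sum_congr rfl fun t ht => ?_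
  rw [mem_range] at ht
  rw [show K + 1 - 1 - t = K - t by omega, show K - (K - t) = t by omega]

theorem adj_pmul_apply {Nf Ng : ℤ} (hf : ∀ i, Nf < i → f i = 0) (hg : ∀ j, Ng < j → g j = 0)
    (n : ℤ) : adj D (pmul D f g) n
      = ∑ p ∈ Icc (n - Ng) Nf ×ˢ Icc (n - Nf) Ng, adjMulTerm D n p.1 p.2 (f p.1) (g p.2) := by
  rw [adj_apply_eq_sum (fun m hm => pmul_apply_of_lt hf hg hm) n subset_rfl]
  calc ∑ m ∈ Icc n (Nf + Ng), adjTerm D n m (pmul D f g m)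
      = ∑ m ∈ Icc n (Nf + Ng), ∑ p ∈ Icc (n - Ng) Nf ×ˢ Icc (n - Nf) Ng,
          adjTerm D n m (mulTerm D m p.1 p.2 (f p.1) (g p.2)) := by
        refine sum_congr rfl fun m hm => ?_
        rw [mem_Icc] at hm
        rw [pmul_apply_eq_sum hf hg m (s := Icc (n - Ng) Nf ×ˢ Icc (n - Nf) Ng)
          fun i j hi hj hij => by rw [mem_product, mem_Icc, mem_Icc]; omega, map_sum]
    _ = _ := by
        rw [sum_comm]
        refine sum_congr rfl fun p hp => sum_adjTerm_mulTerm ?_ _ _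
        rw [mem_product, mem_Icc, mem_Icc] at hp
        omega

theorem pmul_adj_adj_apply {Nf Ng : ℤ} (hf : ∀ i, Nf < i → f i = 0)
    (hg : ∀ j, Ng < j → g j = 0) (n : ℤ) : pmul D (adj D g) (adj D f) n
      = ∑ p ∈ Icc (n - Ng) Nf ×ˢ Icc (n - Nf) Ng, adjMulTerm D n p.1 p.2 (f p.1) (g p.2) := by
  set I := Icc (n - Ng) Nf
  set J := Icc (n - Nf) Ng
  rw [pmul_apply_eq_sum (fun _ h => adj_apply_of_lt hg h) (fun _ h => adj_apply_of_lt hf h) n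
    (s := J ×ˢ I) fun p q hp hq hpq => by rw [mem_product, mem_Icc, mem_Icc]; omega]
  calc ∑ x ∈ J ×ˢ I, mulTerm D n x.1 x.2 (adj D g x.1) (adj D f x.2)
      = ∑ x ∈ J ×ˢ I, ∑ i ∈ I, ∑ j ∈ J,
          mulTerm D n x.1 x.2 (adjTerm D x.1 j (g j)) (adjTerm D x.2 i (f i)) := by
        refine sum_congr rfl fun x hx => ?_
        rw [mem_product, mem_Icc, mem_Icc] at hx
        rw [adj_apply_eq_sum hg x.1 (s := J) (Icc_subset_Icc_left (by omega)),
          adj_apply_eq_sum hf x.2 (s := I) (Icc_subset_Icc_left (by omega))]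
        simp only [map_sum, AddMonoidHom.finsetSum_apply]
    _ = ∑ i ∈ I, ∑ j ∈ J, ∑ x ∈ J ×ˢ I,
          mulTerm D n x.1 x.2 (adjTerm D x.1 j (g j)) (adjTerm D x.2 i (f i)) := by
        rw [sum_comm]
        exact sum_congr rfl fun _ _ => sum_comm
    _ = _ := by
        rw [sum_product]
        refine sum_congr rfl fun i hi => sum_congr rfl fun j hj => ?_
        rw [mem_Icc] at hi hj
        exact sum_mulTerm_adjTerm_adjTerm (Icc_subset_Icc (by omega) hi.2)
          (Icc_subset_Icc (by omega) hj.2) _ _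

variable (D) in
theorem adj_pmul (hf : IsPDO f) (hg : IsPDO g) :
    adj D (pmul D f g) = pmul D (adj D g) (adj D f) := by
  obtain ⟨Nf, hNf⟩ := hf
  obtain ⟨Ng, hNg⟩ := hg
  funext n
  rw [adj_pmul_apply hNf hNg, pmul_adj_adj_apply hNf hNg]

end TwoBKP

open TwoBKP in
theorem quadratic_tensor_preserves_antisymmetry {𝒜 : Type*} [CommRing 𝒜]
    (D : Derivation ℤ 𝒜 𝒜) (A X : ℤ → 𝒜) (hA : IsPDO A) (hX : IsPDO X)
    (hAanti : adj ⇑D A = -A) (hXsym : adj ⇑D X = X) :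
    adj ⇑D (pmul ⇑D A (negPart (pmul ⇑D X A)) - pmul ⇑D (negPart (pmul ⇑D A X)) A)
      = -(pmul ⇑D A (negPart (pmul ⇑D X A)) - pmul ⇑D (negPart (pmul ⇑D A X)) A) := by
  have adj_left : adj D (pmul D A (negPart (pmul D X A))) = pmul D (negPart (pmul D A X)) A := by
    rw [adj_pmul D hA (isPDO_negPart _), adj_negPart, adj_pmul D hX hA, hAanti, hXsym,
      pmul_neg_left, TwoBKP.negPart_neg, pmul_neg_left, pmul_neg_right, neg_neg]
  have adj_right : adj D (pmul D (negPart (pmul D A X)) A) = pmul D A (negPart (pmul D X A)) := by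
    rw [adj_pmul D (isPDO_negPart _) hA, adj_negPart, adj_pmul D hA hX, hAanti, hXsym,
      pmul_neg_right, TwoBKP.negPart_neg, pmul_neg_right, pmul_neg_left, neg_neg]
  rw [adj_sub (hA.pmul (isPDO_negPart _)) ((isPDO_negPart _).pmul hA), adj_left, adj_right,
    neg_sub]
end

section
/- Let (𝒜, D) be a commutative differential ring, ρ ∈ 𝒜, and Ŷ = Σ_{i=0}^n g_i D^i a differential operator in 𝒟⁻. Then in 𝒟⁻: ( ρ∘D^{−1}∘ρ∘Ŷ + Ŷ*∘ρ∘D^{−1}∘ρ )₋ = ρ∘D^{−1}∘(Ŷ*(ρ)) + (Ŷ*(ρ))∘D^{−1}∘ρ, where Ŷ*(ρ) = Σ_{i=0}^n (−1)^i D^i(g_i ρ) ∈ 𝒜 and elements of 𝒜 act as multiplication operators. (This is the key computation showing that the quadratic Poisson tensor restricts to the submanifold of operators whose negative part has the form ρ D^{−1} ρ.) -/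
/-!
Both sides are additive in `Ŷ`, because every sum defining a coefficient of `pmul`, `adj` or
`papply` is finite as soon as the supports are bounded above. It therefore suffices to take a
monomial `Ŷ = g Dʲ`, for which each coefficient of `D^{-m-1}` has a closed form:
* by the Leibniz rule, that of `ρ D⁻¹ ρ ∘ g Dʲ` is `(-1)^{j+m} ρ D^{j+m}(ρ g)`;
* `c Dⁱ ∘ a D⁻¹ b` has the same negative part as `c Dⁱ(a) D⁻¹ b` (an alternating
  binomial sum), so that of `(g Dʲ)* ∘ ρ D⁻¹ ρ` is `(-1)^{j+m} Dʲ(ρ g) D^m(ρ)`;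
* `(g Dʲ)*(ρ) = (-1)^j Dʲ(ρ g)`,
and the two sides agree.
-/

namespace TwoBKP

open Finset Function

theorem finsum_eq_finsum_comp_of_support_subset {α β M : Type*} [AddCommMonoid M] {F : α → M}
    {e : β → α} (he : Injective e) (h : support F ⊆ Set.range e) :
    ∑ᶠ a, F a = ∑ᶠ b, F (e b) := by
  rw [← finsum_mem_range he, finsum_mem_def, Set.indicator_eq_self.mpr h]

theorem finsum_eq_sum_range_of_support_subset {ι M : Type*} [AddCommMonoid M] {F : ι → M}
    (e : ℕ → ι) (he : Injective e) {K : ℕ} (h : ∀ i, F i ≠ 0 → ∃ k < K, e k = i) :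
    ∑ᶠ i, F i = ∑ k ∈ range K, F (e k) := by
  rw [finsum_eq_sum_of_support_subset (s := (range K).map ⟨e, he⟩), sum_map]
  · rfl
  · intro i hi
    obtain ⟨k, hk, rfl⟩ := h i hi
    simpa using ⟨k, hk, rfl⟩

theorem zchoose_natCast (n k : ℕ) : zchoose n k = n.choose k := Ring.choose_natCast n k

theorem zchoose_natCast_eq_zero {n k : ℕ} (h : n < k) : zchoose n k = 0 := by
  rw [zchoose_natCast, Nat.choose_eq_zero_of_lt h, Nat.cast_zero]

theorem zchoose_negSucc (k r : ℕ) :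
    zchoose (Int.negSucc k) r = (-1) ^ r * ((k + r).choose r : ℤ) := by
  rw [zchoose, Int.negSucc_eq, Ring.choose_neg, Units.smul_def, Int.coe_negOnePow_natCast,
    smul_eq_mul, show (k : ℤ) + 1 + r - 1 = ((k + r : ℕ) : ℤ) by push_cast; ring,
    Ring.choose_natCast]

theorem zchoose_neg_one (r : ℕ) : zchoose (-1) r = (-1) ^ r := by
  simpa using zchoose_negSucc 0 r

theorem zchoose_zero (r : ℕ) : zchoose 0 r = if r = 0 then 1 else 0 :=
  Ring.choose_zero_ite ℤ r

section Leibniz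

variable {R A : Type*} [CommSemiring R] [CommRing A] [Algebra R A] (D : Derivation R A A)

theorem iterate_derivation_mul (n : ℕ) (a b : A) :
    (⇑D)^[n] (a * b)
      = ∑ k ∈ range (n + 1), n.choose k • ((⇑D)^[k] a * (⇑D)^[n - k] b) := by
  induction n with
  | zero => simp
  | succ n ih =>
    rw [sum_choose_succ_nsmul (fun k l => (⇑D)^[k] a * (⇑D)^[l] b) n, iterate_succ_apply', ih,
      map_sum, ← sum_add_distrib]
    refine sum_congr rfl fun k hk => ?_
    rw [map_nsmul, Derivation.leibniz, ← smul_add, smul_eq_mul, smul_eq_mul,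
      Nat.sub_add_comm (Nat.lt_succ_iff.mp (mem_range.mp hk)), iterate_succ_apply',
      iterate_succ_apply']
    ring

theorem sum_choose_neg_one_pow_iterate (a b : A) (i m : ℕ) :
    ∑ t ∈ range (i + 1), i.choose t • ((-1 : ℤ) ^ t • (⇑D)^[i - t] (a * (⇑D)^[m + t] b))
      = (⇑D)^[i] a * (⇑D)^[m] b := by
  induction i generalizing m with
  | zero => simp
  | succ i ih =>
    -- Pascal's rule splits the sum at `(i + 1, m)` into `D` of the sum at `(i, m)`
    -- minus the sum at `(i, m + 1)`.
    have hD : ∑ t ∈ range (i + 1),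
        i.choose t • ((-1 : ℤ) ^ t • (⇑D)^[i + 1 - t] (a * (⇑D)^[m + t] b))
          = D ((⇑D)^[i] a * (⇑D)^[m] b) := by
      rw [← ih m, map_sum]
      refine sum_congr rfl fun t ht => ?_
      rw [map_nsmul, map_zsmul, Nat.sub_add_comm (Nat.lt_succ_iff.mp (mem_range.mp ht)),
        iterate_succ_apply']
    have hshift : ∑ t ∈ range (i + 1),
        i.choose t • ((-1 : ℤ) ^ (t + 1) • (⇑D)^[i - t] (a * (⇑D)^[m + (t + 1)] b))
          = -((⇑D)^[i] a * (⇑D)^[m + 1] b) := by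
      rw [← ih (m + 1), ← sum_neg_distrib]
      refine sum_congr rfl fun t _ => ?_
      rw [pow_succ, mul_neg_one, neg_smul, smul_neg, ← add_assoc, add_right_comm m]
    rw [sum_choose_succ_nsmul (fun t r => (-1 : ℤ) ^ t • (⇑D)^[r] (a * (⇑D)^[m + t] b)) i,
      hD, hshift, Derivation.leibniz, iterate_succ_apply', iterate_succ_apply', smul_eq_mul,
      smul_eq_mul]
    ring

end Leibniz

section Operators

variable {A : Type*} [CommRing A]

theorem sc_eq_single (a : A) : sc a = Pi.single 0 a := by
  funext n
  simp [sc, Pi.single_apply]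

theorem pD_eq_single (k : ℤ) : pD k = Pi.single k (1 : A) := by
  funext n
  simp [pD, Pi.single_apply]

theorem negPart_add (f g : ℤ → A) : negPart (f + g) = negPart f + negPart g := by
  funext n
  simp only [negPart, Pi.add_apply]
  split_ifs <;> simp

theorem isPDO_zero : IsPDO (0 : ℤ → A) := ⟨0, fun _ _ => rfl⟩

theorem isPDO_single (j : ℤ) (a : A) : IsPDO (Pi.single j a) :=
  ⟨j, fun _ hi => by simp [hi.ne']⟩

theorem IsPDO.add {f g : ℤ → A} (hf : IsPDO f) (hg : IsPDO g) : IsPDO (f + g) := by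
  obtain ⟨M, hM⟩ := hf
  obtain ⟨N, hN⟩ := hg
  exact ⟨max M N, fun i hi => by
    rw [Pi.add_apply, hM i (max_lt_iff.mp hi).1, hN i (max_lt_iff.mp hi).2, add_zero]⟩

noncomputable def pmulTerm (D : A → A) (f g : ℤ → A) (n : ℤ) (p : ℤ × ℤ) : A :=
  if 0 ≤ p.1 + p.2 - n then
    zchoose p.1 (p.1 + p.2 - n).toNat • (f p.1 * D^[(p.1 + p.2 - n).toNat] (g p.2))
  else 0

theorem pmul_eq_finsum_pmulTerm (D : A → A) (f g : ℤ → A) (n : ℤ) :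
    pmul D f g n = ∑ᶠ p, pmulTerm D f g n p := rfl

theorem pmul_single_left (D : A → A) (i : ℤ) (a : A) (g : ℤ → A) (n : ℤ) :
    pmul D (Pi.single i a) g n = ∑ᶠ j, pmulTerm D (Pi.single i a) g n (i, j) := by
  refine finsum_eq_finsum_comp_of_support_subset (Prod.mk_right_injective i) ?_
  rintro ⟨i', j⟩ hp
  obtain rfl : i' = i := by
    by_contra h
    simp [Pi.single_eq_of_ne h] at hp
  exact ⟨j, rfl⟩

theorem pmul_sc_left (D : A → A) (a : A) (g : ℤ → A) (n : ℤ) :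
    pmul D (sc a) g n = a * g n := by
  rw [sc_eq_single, pmul_single_left, finsum_eq_single _ n]
  · simp [pmulTerm, zchoose_zero]
  · intro j hj
    simp only [pmulTerm, zchoose_zero]
    split_ifs
    · exact absurd (by omega) hj
    · simp
    · rfl

theorem pmul_zero_left (D : A → A) (g : ℤ → A) : pmul D 0 g = 0 := by
  funext n
  simp [pmul]

theorem pmulTerm_add_left (D : A → A) (f₁ f₂ g : ℤ → A) (n : ℤ) (p : ℤ × ℤ) :
    pmulTerm D (f₁ + f₂) g n p = pmulTerm D f₁ g n p + pmulTerm D f₂ g n p := by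
  unfold pmulTerm
  split_ifs <;> simp [add_mul]

theorem IsPDO.finite_support_of_forall_ne_zero {M : Type*} [Zero M] {f : ℤ → A}
    (hf : IsPDO f) (n : ℤ) {T : ℤ → M} (hT : ∀ i, T i ≠ 0 → n ≤ i ∧ f i ≠ 0) :
    (support T).Finite := by
  obtain ⟨N, hN⟩ := hf
  refine (Icc n N).finite_toSet.subset fun i hi => ?_
  obtain ⟨hni, hfi⟩ := hT i hi
  simp only [coe_Icc, Set.mem_Icc]
  exact ⟨hni, not_lt.mp fun h => hfi (hN i h)⟩

theorem papply_add (D : A → A) {f g : ℤ → A} (hf : IsPDO f) (hg : IsPDO g) (a : A) :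
    papply D (f + g) a = papply D f a + papply D g a := by
  have hfin : ∀ {h : ℤ → A}, IsPDO h →
      (support fun i => if 0 ≤ i then h i * D^[i.toNat] a else 0).Finite :=
    fun hh => hh.finite_support_of_forall_ne_zero 0 fun i hi => by
    split_ifs at hi with h0
    · exact ⟨h0, fun h => hi (by simp [h])⟩
    · exact absurd rfl hi
  rw [papply, papply, papply, ← finsum_add_distrib (hfin hf) (hfin hg)]
  refine finsum_congr fun i => ?_
  split_ifs <;> simp [add_mul]

noncomputable def invDSandwich (D : A → A) (a b : A) : ℤ → A :=
  pmul D (sc a) (pmul D (pD (-1)) (sc b))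

def SandwichIdentity (D : A → A) (ρ : A) (Y : ℤ → A) : Prop :=
  negPart (pmul D (invDSandwich D ρ ρ) Y + pmul D (adj D Y) (invDSandwich D ρ ρ))
    = invDSandwich D ρ (papply D (adj D Y) ρ) + invDSandwich D (papply D (adj D Y) ρ) ρ

variable {F : Type*} [FunLike F A A] [AddMonoidHomClass F A A] (D : F)

theorem pmul_single_right (f : ℤ → A) (j : ℤ) (b : A) (n : ℤ) :
    pmul D f (Pi.single j b) n = ∑ᶠ i, pmulTerm D f (Pi.single j b) n (i, j) := by
  refine finsum_eq_finsum_comp_of_support_subset (Prod.mk_left_injective j) ?_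
  rintro ⟨i, j'⟩ hp
  obtain rfl : j' = j := by
    by_contra h
    simp [Pi.single_eq_of_ne h, iterate_map_zero] at hp
  exact ⟨i, rfl⟩

theorem pmulTerm_add_right (f g₁ g₂ : ℤ → A) (n : ℤ) (p : ℤ × ℤ) :
    pmulTerm D f (g₁ + g₂) n p = pmulTerm D f g₁ n p + pmulTerm D f g₂ n p := by
  unfold pmulTerm
  split_ifs <;> simp [iterate_map_add, mul_add]

theorem finite_support_pmulTerm {f g : ℤ → A} (hf : IsPDO f) (hg : IsPDO g) (n : ℤ) :
    (support (pmulTerm D f g n)).Finite := by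
  obtain ⟨M, hM⟩ := hf
  obtain ⟨N, hN⟩ := hg
  refine (Icc (n - N) M ×ˢ Icc (n - M) N).finite_toSet.subset fun ⟨i, j⟩ hp => ?_
  simp only [mem_support, pmulTerm] at hp
  split_ifs at hp with hn
  · have hi : i ≤ M := not_lt.mp fun h => hp (by simp [hM i h])
    have hj : j ≤ N := not_lt.mp fun h => hp (by simp [hN j h, iterate_map_zero])
    simp only [coe_product, coe_Icc, Set.mem_prod, Set.mem_Icc]
    omega
  · exact absurd rfl hp

theorem pmul_add_left {f₁ f₂ g : ℤ → A} (hf₁ : IsPDO f₁) (hf₂ : IsPDO f₂)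
    (hg : IsPDO g) :
    pmul D (f₁ + f₂) g = pmul D f₁ g + pmul D f₂ g := by
  funext n
  simp only [pmul_eq_finsum_pmulTerm, pmulTerm_add_left, Pi.add_apply]
  exact finsum_add_distrib (finite_support_pmulTerm D hf₁ hg n)
    (finite_support_pmulTerm D hf₂ hg n)

theorem pmul_add_right {f g₁ g₂ : ℤ → A} (hf : IsPDO f) (hg₁ : IsPDO g₁)
    (hg₂ : IsPDO g₂) :
    pmul D f (g₁ + g₂) = pmul D f g₁ + pmul D f g₂ := by
  funext n
  simp only [pmul_eq_finsum_pmulTerm, pmulTerm_add_right, Pi.add_apply]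
  exact finsum_add_distrib (finite_support_pmulTerm D hf hg₁ n)
    (finite_support_pmulTerm D hf hg₂ n)

theorem pmul_eq_finsum_pmul_single_left {f g : ℤ → A} (hf : IsPDO f) (hg : IsPDO g) (n : ℤ) :
    pmul D f g n = ∑ᶠ i, pmul D (Pi.single i (f i)) g n := by
  rw [pmul_eq_finsum_pmulTerm, finsum_curry _ (finite_support_pmulTerm D hf hg n)]
  refine finsum_congr fun i =>
    ((pmul_single_left _ _ _ _ _).trans (finsum_congr fun j => ?_)).symm
  simp [pmulTerm]

theorem IsPDO.adj {f : ℤ → A} (hf : IsPDO f) : IsPDO (adj D f) := by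
  obtain ⟨N, hN⟩ := hf
  refine ⟨N, fun n hn => finsum_eq_zero_of_forall_eq_zero fun i => ?_⟩
  split_ifs
  · rw [hN i (by omega), iterate_map_zero, smul_zero]
  · rfl

theorem adj_add {f g : ℤ → A} (hf : IsPDO f) (hg : IsPDO g) :
    adj D (f + g) = adj D f + adj D g := by
  funext n
  have hfin : ∀ {h : ℤ → A}, IsPDO h → (support fun i => if 0 ≤ i - n then
      ((-1 : ℤ) ^ i.natAbs * zchoose i (i - n).toNat) • (⇑D)^[(i - n).toNat] (h i)
      else 0).Finite := fun hh => hh.finite_support_of_forall_ne_zero n fun i hi => by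
    split_ifs at hi
    · exact ⟨by omega, fun h0 => hi (by simp [h0, iterate_map_zero])⟩
    · exact absurd rfl hi
  rw [Pi.add_apply, adj, adj, adj, ← finsum_add_distrib (hfin hf) (hfin hg)]
  refine finsum_congr fun i => ?_
  split_ifs <;> simp [iterate_map_add]

theorem adj_single (j : ℕ) (g : A) (n : ℤ) :
    adj D (Pi.single (j : ℤ) g) n = if 0 ≤ (j : ℤ) - n then
      ((-1 : ℤ) ^ j * zchoose j ((j : ℤ) - n).toNat) • (⇑D)^[((j : ℤ) - n).toNat] g else 0 := by
  rw [adj, finsum_eq_single _ (j : ℤ)]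
  · simp
  · intro i hi
    simp [Pi.single_eq_of_ne hi, iterate_map_zero]

theorem adj_single_natCast {i j : ℕ} (h : i ≤ j) (g : A) :
    adj D (Pi.single (j : ℤ) g) i = ((-1 : ℤ) ^ j * j.choose i) • (⇑D)^[j - i] g := by
  rw [adj_single, if_pos (by omega), show ((j : ℤ) - i).toNat = j - i by omega, zchoose_natCast,
    Nat.choose_symm h]

theorem nonneg_and_le_of_adj_single_ne_zero {j : ℕ} {g : A} {n : ℤ}
    (h : adj D (Pi.single (j : ℤ) g) n ≠ 0) : 0 ≤ n ∧ n ≤ j := by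
  rw [adj_single] at h
  split_ifs at h with hn
  · refine ⟨not_lt.mp fun hneg => h ?_, by omega⟩
    rw [zchoose_natCast_eq_zero (by omega), mul_zero, zero_smul]
  · exact absurd rfl h

theorem invDSandwich_apply (a b : A) (n : ℤ) :
    invDSandwich D a b n
      = if n < 0 then (-1 : ℤ) ^ (-1 - n).toNat • (a * (⇑D)^[(-1 - n).toNat] b) else 0 := by
  rw [invDSandwich, pmul_sc_left, pD_eq_single, sc_eq_single, pmul_single_left,
    finsum_eq_single _ 0]
  · simp only [pmulTerm, Pi.single_eq_same, add_zero, one_mul, zchoose_neg_one]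
    by_cases hn : n < 0
    · rw [if_pos (by omega), if_pos hn, mul_smul_comm]
    · rw [if_neg (by omega), if_neg hn, mul_zero]
  · intro j hj
    simp [pmulTerm, Pi.single_eq_of_ne hj, iterate_map_zero]

theorem invDSandwich_negSucc (a b : A) (m : ℕ) :
    invDSandwich D a b (Int.negSucc m) = (-1 : ℤ) ^ m • (a * (⇑D)^[m] b) := by
  rw [invDSandwich_apply, if_pos (Int.negSucc_lt_zero m),
    show (-1 - Int.negSucc m).toNat = m by omega]

theorem invDSandwich_of_nonneg (a b : A) {n : ℤ} (h : 0 ≤ n) : invDSandwich D a b n = 0 := by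
  rw [invDSandwich_apply, if_neg h.not_gt]

theorem invDSandwich_add_left (a a' b : A) :
    invDSandwich D (a + a') b = invDSandwich D a b + invDSandwich D a' b := by
  funext n
  simp only [invDSandwich_apply, Pi.add_apply]
  split_ifs <;> simp [add_mul]

theorem invDSandwich_add_right (a b b' : A) :
    invDSandwich D a (b + b') = invDSandwich D a b + invDSandwich D a b' := by
  funext n
  simp only [invDSandwich_apply, Pi.add_apply]
  split_ifs <;> simp [iterate_map_add, mul_add]

theorem isPDO_invDSandwich (a b : A) : IsPDO (invDSandwich D a b) :=
  ⟨-1, fun _ hn => invDSandwich_of_nonneg D a b (by omega)⟩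

theorem SandwichIdentity.add {ρ : A} {Y₁ Y₂ : ℤ → A} (hY₁ : IsPDO Y₁) (hY₂ : IsPDO Y₂)
    (h₁ : SandwichIdentity D ρ Y₁) (h₂ : SandwichIdentity D ρ Y₂) :
    SandwichIdentity D ρ (Y₁ + Y₂) := by
  have hS := isPDO_invDSandwich D ρ ρ
  rw [SandwichIdentity, pmul_add_right D hS hY₁ hY₂, adj_add D hY₁ hY₂,
    pmul_add_left D (hY₁.adj D) (hY₂.adj D) hS, papply_add _ (hY₁.adj D) (hY₂.adj D),
    invDSandwich_add_left, invDSandwich_add_right, add_add_add_comm, negPart_add, h₁, h₂]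
  abel

end Operators

section Derivation

variable {R A : Type*} [CommSemiring R] [CommRing A] [Algebra R A] (D : Derivation R A A)

theorem pmul_invDSandwich_single_negSucc (a b g : A) (j m : ℕ) :
    pmul D (invDSandwich D a b) (Pi.single (j : ℤ) g) (Int.negSucc m)
      = (-1 : ℤ) ^ (j + m) • (a * (⇑D)^[j + m] (b * g)) := by
  rw [pmul_single_right, finsum_eq_sum_range_of_support_subset Int.negSucc
    (fun _ _ => Int.negSucc.inj) (K := j + m + 1), iterate_derivation_mul, mul_sum, smul_sum]
  · refine sum_congr rfl fun k hk => ?_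
    have hk : k ≤ j + m := Nat.lt_succ_iff.mp (mem_range.mp hk)
    have hsign : (-1 : ℤ) ^ (j + m) = (-1) ^ (j + m - k) * (-1) ^ k := by
      rw [← pow_add, Nat.sub_add_cancel hk]
    rw [pmulTerm, if_pos (by omega),
      show (Int.negSucc k + j - Int.negSucc m).toNat = j + m - k by omega, zchoose_negSucc,
      Nat.add_sub_cancel' hk, Nat.choose_symm hk, invDSandwich_negSucc, Pi.single_eq_same, hsign]
    simp only [zsmul_eq_mul, nsmul_eq_mul]
    push_cast
    ring
  · intro i hi
    simp only [pmulTerm, Pi.single_eq_same] at hi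
    split_ifs at hi with h
    · have hneg : i < 0 := not_le.mp fun h0 => hi (by simp [invDSandwich_of_nonneg D a b h0])
      exact ⟨(-1 - i).toNat, by omega, by omega⟩
    · exact absurd rfl hi

theorem pmul_single_invDSandwich_negSucc (c a b : A) (i m : ℕ) :
    pmul D (Pi.single (i : ℤ) c) (invDSandwich D a b) (Int.negSucc m)
      = (-1 : ℤ) ^ m • (c * (⇑D)^[i] a * (⇑D)^[m] b) := by
  rw [pmul_single_left, finsum_eq_sum_range_of_support_subset (fun t => Int.negSucc (m + t))
    (fun _ _ h => Nat.add_left_cancel (Int.negSucc.inj h)) (K := i + 1), mul_assoc,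
    ← sum_choose_neg_one_pow_iterate D a b i m, mul_sum, smul_sum]
  · refine sum_congr rfl fun t ht => ?_
    have ht : t ≤ i := Nat.lt_succ_iff.mp (mem_range.mp ht)
    rw [pmulTerm, if_pos (by omega), show ((i : ℤ) + Int.negSucc (m + t) - Int.negSucc m).toNat
      = i - t by omega, zchoose_natCast, Nat.choose_symm ht, invDSandwich_negSucc,
      iterate_map_zsmul, Pi.single_eq_same, pow_add]
    simp only [zsmul_eq_mul, nsmul_eq_mul]
    push_cast
    ring
  · intro l hl
    simp only [pmulTerm, Pi.single_eq_same] at hl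
    split_ifs at hl with h
    · have hneg : l < 0 := not_le.mp fun h0 => hl (by
        simp [invDSandwich_of_nonneg D a b h0, iterate_map_zero])
      have hle : ((i : ℤ) + l - Int.negSucc m).toNat ≤ i := not_lt.mp fun hlt => hl (by
        rw [zchoose_natCast_eq_zero hlt, zero_smul])
      exact ⟨(-1 - l).toNat - m, by omega, by omega⟩
    · exact absurd rfl hl

theorem pmul_adj_single_invDSandwich_negSucc (a b g : A) (j m : ℕ) :
    pmul D (adj D (Pi.single (j : ℤ) g)) (invDSandwich D a b) (Int.negSucc m)
      = (-1 : ℤ) ^ (j + m) • ((⇑D)^[j] (a * g) * (⇑D)^[m] b) := by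
  rw [pmul_eq_finsum_pmul_single_left D ((isPDO_single _ g).adj D) (isPDO_invDSandwich D a b),
    finsum_eq_sum_range_of_support_subset ((↑) : ℕ → ℤ) Nat.cast_injective (K := j + 1),
    iterate_derivation_mul, sum_mul, smul_sum]
  · refine sum_congr rfl fun i hi => ?_
    have hi : i ≤ j := Nat.lt_succ_iff.mp (mem_range.mp hi)
    rw [adj_single_natCast D hi, pmul_single_invDSandwich_negSucc, pow_add]
    simp only [zsmul_eq_mul, nsmul_eq_mul]
    push_cast
    ring
  · intro i hi
    have hadj : adj D (Pi.single (j : ℤ) g) i ≠ 0 := fun h0 => hi (by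
      rw [h0, Pi.single_zero, pmul_zero_left, Pi.zero_apply])
    obtain ⟨h0, hj⟩ := nonneg_and_le_of_adj_single_ne_zero D hadj
    exact ⟨i.toNat, by omega, by omega⟩

theorem papply_adj_single (a g : A) (j : ℕ) :
    papply D (adj D (Pi.single (j : ℤ) g)) a = (-1 : ℤ) ^ j • (⇑D)^[j] (a * g) := by
  rw [papply,
    finsum_eq_sum_range_of_support_subset ((↑) : ℕ → ℤ) Nat.cast_injective (K := j + 1),
    iterate_derivation_mul, smul_sum]
  · refine sum_congr rfl fun i hi => ?_
    have hi : i ≤ j := Nat.lt_succ_iff.mp (mem_range.mp hi)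
    rw [if_pos (Int.natCast_nonneg i), adj_single_natCast D hi, Int.toNat_natCast]
    simp only [zsmul_eq_mul, nsmul_eq_mul]
    push_cast
    ring
  · intro i hi
    split_ifs at hi with h0
    · obtain ⟨-, hj⟩ := nonneg_and_le_of_adj_single_ne_zero D (left_ne_zero_of_mul hi)
      exact ⟨i.toNat, by omega, by omega⟩
    · exact absurd rfl hi

theorem sandwichIdentity_single (ρ g : A) (j : ℕ) :
    SandwichIdentity D ρ (Pi.single (j : ℤ) g) := by
  rw [SandwichIdentity, papply_adj_single]
  funext n
  cases n with
  | ofNat k => simp [negPart, invDSandwich_of_nonneg]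
  | negSucc m =>
    simp only [negPart, Pi.add_apply, if_pos (Int.negSucc_lt_zero m),
      pmul_invDSandwich_single_negSucc, pmul_adj_single_invDSandwich_negSucc,
      invDSandwich_negSucc, iterate_map_zsmul]
    rw [add_comm j m, iterate_add_apply, pow_add]
    simp only [zsmul_eq_mul]
    push_cast
    ring

end Derivation

end TwoBKP

open TwoBKP in
theorem quadratic_tensor_restricts_to_rho_submanifold {𝒜 : Type*} [CommRing 𝒜]
    (D : Derivation ℤ 𝒜 𝒜) (ρ : 𝒜) (Y : ℤ → 𝒜)
    (hY : IsPDO Y) (hYdiff : ∀ i : ℤ, i < 0 → Y i = 0) :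
    negPart
        (pmul ⇑D (pmul ⇑D (sc ρ) (pmul ⇑D (pD (-1)) (sc ρ))) Y
          + pmul ⇑D (adj ⇑D Y) (pmul ⇑D (sc ρ) (pmul ⇑D (pD (-1)) (sc ρ))))
      = pmul ⇑D (sc ρ) (pmul ⇑D (pD (-1)) (sc (papply ⇑D (adj ⇑D Y) ρ)))
        + pmul ⇑D (sc (papply ⇑D (adj ⇑D Y) ρ)) (pmul ⇑D (pD (-1)) (sc ρ)) := by
  obtain ⟨N, hN⟩ := hY
  have hsum : Y = ∑ j ∈ Finset.Icc 0 N, Pi.single j (Y j) := by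
    funext n
    simp only [Finset.sum_apply, Pi.single_apply, Finset.sum_ite_eq, Finset.mem_Icc]
    split_ifs with h
    · rfl
    · rcases not_and_or.mp h with h | h
      exacts [hYdiff n (not_le.mp h), hN n (not_le.mp h)]
  suffices IsPDO Y ∧ SandwichIdentity D ρ Y from this.2
  rw [hsum]
  refine Finset.sum_induction _ (fun Y => IsPDO Y ∧ SandwichIdentity D ρ Y)
    (fun _ _ h₁ h₂ => ⟨h₁.1.add h₂.1, h₁.2.add D h₁.1 h₂.1 h₂.2⟩)
    ⟨isPDO_zero, by simpa only [Pi.single_zero] using sandwichIdentity_single D ρ 0 0⟩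
    fun j hj => ?_
  lift j to ℕ using (Finset.mem_Icc.mp hj).1
  exact ⟨isPDO_single _ _, sandwichIdentity_single D ρ _ j⟩
end
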